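/- arXiv:2105.02931 — 7 statements merged into one kernel-verified Lean document; each statement's English description precedes it below -/
import Mathlib

section
/- Fix θ₋ᵢ > 0 and λ > 0. The Cournot equilibrium effort aᵢ*(θᵢ) = λθᵢ(θ₋ᵢ + 1)/((2θᵢ+1)(2θ₋ᵢ+1) - θᵢθ₋ᵢ) is strictly increasing in θᵢ on (0, ∞). -/
/-!
The denominator is affine in `θᵢ`: `(2θᵢ + 1)(2θ₋ᵢ + 1) - θᵢθ₋ᵢ = (3θ₋ᵢ + 2)θᵢ + (2θ₋ᵢ + 1)`, so the
effort has the form `c x / (a x + b)` with `a, b, c > 0`, and `x / (a x + b) = 1 / (a + b / x)` is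
increasing on `x > 0`.
-/

theorem strictMonoOn_mul_div_add {a b c : ℝ} (ha : 0 ≤ a) (hb : 0 < b) (hc : 0 < c) :
    StrictMonoOn (fun x : ℝ => c * x / (a * x + b)) (Set.Ioi 0) := by
  intro x (hx : 0 < x) y (hy : 0 < y) hxy
  have hdx : 0 < a * x + b := by positivity
  have hdy : 0 < a * y + b := by positivity
  show c * x / (a * x + b) < c * y / (a * y + b)
  rw [div_lt_div_iff₀ hdx hdy]
  linear_combination mul_lt_mul_of_pos_left hxy (mul_pos hc hb)

theorem stmt_3 (θmi lam : ℝ) (hθ : 0 < θmi) (hlam : 0 < lam) :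
    StrictMonoOn
      (fun θi : ℝ => lam * θi * (θmi + 1) / ((2 * θi + 1) * (2 * θmi + 1) - θi * θmi))
      (Set.Ioi 0) := by
  have h := strictMonoOn_mul_div_add (a := 3 * θmi + 2) (b := 2 * θmi + 1)
    (c := lam * (θmi + 1)) (by positivity) (by positivity) (by positivity)
  convert h using 2 with θi
  ring
end

section
/- Fix θᵢ > 0 and λ > 0. The Cournot equilibrium effort aᵢ*(θ₋ᵢ) = λθᵢ(θ₋ᵢ + 1)/((2θᵢ+1)(2θ₋ᵢ+1) - θᵢθ₋ᵢ) is strictly decreasing in θ₋ᵢ on (0, ∞). -/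
/-! The effort is a Möbius function `(λθᵢ x + λθᵢ) / ((3θᵢ + 2) x + (2θᵢ + 1))` of the opponent's
type `x`, and its determinant `λθᵢ (2θᵢ + 1) - λθᵢ (3θᵢ + 2) = -λθᵢ (θᵢ + 1)` is negative. -/

theorem strictAntiOn_div_of_mul_sub_mul_neg {a b c d : ℝ} (h : a * d - b * c < 0) :
    StrictAntiOn (fun x => (a * x + b) / (c * x + d)) {x | 0 < c * x + d} := by
  intro x hx y hy hxy
  rw [div_lt_div_iff₀ hy hx]
  have cross : (a * y + b) * (c * x + d) - (a * x + b) * (c * y + d) = (a * d - b * c) * (y - x) := by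
    ring
  nlinarith [mul_neg_of_neg_of_pos h (sub_pos.2 hxy)]

theorem stmt_4 (θi lam : ℝ) (hθ : 0 < θi) (hlam : 0 < lam) :
    StrictAntiOn
      (fun θmi : ℝ => lam * θi * (θmi + 1) / ((2 * θi + 1) * (2 * θmi + 1) - θi * θmi))
      (Set.Ioi 0) := by
  have moebius : (fun θmi : ℝ => lam * θi * (θmi + 1) / ((2 * θi + 1) * (2 * θmi + 1) - θi * θmi)) =
      fun x => (lam * θi * x + lam * θi) / ((3 * θi + 2) * x + (2 * θi + 1)) := by
    funext x
    ring
  rw [moebius]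
  refine (strictAntiOn_div_of_mul_sub_mul_neg ?_).mono fun x hx => ?_
  · have det : lam * θi * (2 * θi + 1) - lam * θi * (3 * θi + 2) = -(lam * θi * (θi + 1)) := by ring
    rw [det, neg_lt_zero]
    positivity
  · have hx : 0 < x := hx
    show 0 < (3 * θi + 2) * x + (2 * θi + 1)
    positivity
end

section
/- For θ > 0, the inequality λ²θ(4θ+3)/(8(2θ+1)²) > λ²θ(θ+1)²(2θ+1)/(2[(2θ+1)² - θ²]²) holds for every λ ≠ 0 if and only if θ > (1+√17)/8. -/
/-!
Since `(2θ+1)² - θ² = (θ+1)(3θ+1)`, the gap between the two utilities factors as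
`λ²θ(θ+1)(4θ² - θ - 1) / (8(2θ+1)²(3θ+1)²)`, so for `θ > 0` and `λ ≠ 0` its sign is that of
`4θ² - θ - 1`, whose positive root is `(1 + √17)/8`.
-/

open Real

noncomputable section

def collusionUtility (θ lam : ℝ) : ℝ :=
  lam ^ 2 * θ * (4 * θ + 3) / (8 * (2 * θ + 1) ^ 2)

def cournotUtility (θ lam : ℝ) : ℝ :=
  lam ^ 2 * θ * (θ + 1) ^ 2 * (2 * θ + 1) / (2 * ((2 * θ + 1) ^ 2 - θ ^ 2) ^ 2)

end

lemma collusionUtility_sub_cournotUtility {θ : ℝ} (hθ : 0 ≤ θ) (lam : ℝ) :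
    collusionUtility θ lam - cournotUtility θ lam =
      lam ^ 2 * θ * (θ + 1) / (8 * (2 * θ + 1) ^ 2 * (3 * θ + 1) ^ 2) *
        (4 * θ ^ 2 - θ - 1) := by
  have hP : (2 * θ + 1) ^ 2 - θ ^ 2 = (θ + 1) * (3 * θ + 1) := by ring
  have h₁ : θ + 1 ≠ 0 := by positivity
  have h₂ : 2 * θ + 1 ≠ 0 := by positivity
  have h₃ : 3 * θ + 1 ≠ 0 := by positivity
  rw [collusionUtility, cournotUtility, hP]
  field_simp
  ring

lemma cournotUtility_lt_collusionUtility_iff {θ : ℝ} (hθ : 0 < θ) {lam : ℝ} (hlam : lam ≠ 0) :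
    cournotUtility θ lam < collusionUtility θ lam ↔ 0 < 4 * θ ^ 2 - θ - 1 := by
  have hc : 0 < lam ^ 2 * θ * (θ + 1) / (8 * (2 * θ + 1) ^ 2 * (3 * θ + 1) ^ 2) := by
    positivity
  rw [← sub_pos, collusionUtility_sub_cournotUtility hθ.le, mul_pos_iff_of_pos_left hc]

lemma four_mul_sq_sub_sub_one_pos_iff {θ : ℝ} (hθ : 0 ≤ θ) :
    0 < 4 * θ ^ 2 - θ - 1 ↔ (1 + √17) / 8 < θ := by
  have h17 : √17 ^ 2 = 17 := sq_sqrt (by norm_num)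
  have hroots : 4 * θ ^ 2 - θ - 1 = 4 * (θ - (1 + √17) / 8) * (θ - (1 - √17) / 8) := by
    linear_combination (1 / 16 : ℝ) * h17
  have hneg : 0 < θ - (1 - √17) / 8 := by
    nlinarith [sqrt_nonneg 17]
  rw [hroots, mul_pos_iff_of_pos_right hneg, mul_pos_iff_of_pos_left four_pos, sub_pos]

theorem stmt_5 (θ : ℝ) (hθ : 0 < θ) :
    (∀ lam : ℝ, lam ≠ 0 →
      lam ^ 2 * θ * (4 * θ + 3) / (8 * (2 * θ + 1) ^ 2) >
      lam ^ 2 * θ * (θ + 1) ^ 2 * (2 * θ + 1) / (2 * ((2 * θ + 1) ^ 2 - θ ^ 2) ^ 2)) ↔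
    θ > (1 + Real.sqrt 17) / 8 := by
  change (∀ lam : ℝ, lam ≠ 0 → cournotUtility θ lam < collusionUtility θ lam) ↔ _
  rw [gt_iff_lt, ← four_mul_sq_sub_sub_one_pos_iff hθ.le]
  constructor
  · intro h
    exact (cournotUtility_lt_collusionUtility_iff hθ one_ne_zero).1 (h 1 one_ne_zero)
  · intro h lam hlam
    exact (cournotUtility_lt_collusionUtility_iff hθ hlam).2 h
end

section
/- For θ > 0, the polynomial inequality 4θ⁵ + 11θ⁴ + 8θ³ > 2θ² + 4θ + 1 holds if and only if θ > (1+√17)/8. -/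
/-!
The difference of the two sides factors as `(θ + 1)³ (4θ² - θ - 1)`, and the quadratic factor has
roots `(1 ± √17)/8`, the smaller of which is negative. For `θ > 0` the sign of the difference is
therefore the sign of `θ - (1 + √17)/8`.
-/

lemma quintic_sub_eq_cube_mul_quadratic (x : ℝ) :
    4 * x ^ 5 + 11 * x ^ 4 + 8 * x ^ 3 - (2 * x ^ 2 + 4 * x + 1) =
      (x + 1) ^ 3 * (4 * x ^ 2 - x - 1) := by
  ring

lemma quadratic_eq_mul_roots (x : ℝ) :
    4 * x ^ 2 - x - 1 = 4 * ((x - (1 + √17) / 8) * (x - (1 - √17) / 8)) := by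
  have h17 : √17 ^ 2 = 17 := Real.sq_sqrt (by norm_num)
  linear_combination h17 / 16

lemma quadratic_pos_iff {x : ℝ} (hx : 0 ≤ x) :
    0 < 4 * x ^ 2 - x - 1 ↔ (1 + √17) / 8 < x := by
  have h_small_root : (1 - √17) / 8 < x := by
    have : 1 < √17 := Real.lt_sqrt_of_sq_lt (by norm_num)
    linarith
  rw [quadratic_eq_mul_roots, mul_pos_iff_of_pos_left four_pos,
    mul_pos_iff_of_pos_right (sub_pos.2 h_small_root), sub_pos]

theorem stmt_6 (θ : ℝ) (hθ : 0 < θ) :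
    4 * θ ^ 5 + 11 * θ ^ 4 + 8 * θ ^ 3 > 2 * θ ^ 2 + 4 * θ + 1 ↔
    θ > (1 + Real.sqrt 17) / 8 := by
  rw [gt_iff_lt, ← sub_pos, quintic_sub_eq_cube_mul_quadratic,
    mul_pos_iff_of_pos_left (by positivity), quadratic_pos_iff hθ.le]
end

section
/- Let θ > 0 and λ ≠ 0. The inequality λ²θ̂(4θθ̂ + 4θ - θ̂)/(8θ(2θ̂+1)²) > λ²θ(4θ+3)/(8(2θ+1)²) holds if and only if θ < θ̂ < θ(4θ+3). -/
/-!
Clearing denominators, the difference of the two utilities is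
`λ² (θ̂ - θ) (θ(4θ+3) - θ̂) / (8θ (2θ̂+1)² (2θ+1)²)`: the numerator is a quadratic in `θ̂`
with leading coefficient `-1` vanishing at `θ̂ = θ` (where both sides agree) and at `θ̂ = θ(4θ+3)`.
It is therefore positive exactly between these roots. At the excluded value `θ̂ = -1/2` the left
side is `0` through division by zero, and that value lies outside the interval anyway.
-/

theorem collusion_sub_monopoly {θ θhat : ℝ} (lam : ℝ) (hθ : 0 < θ) (hθhat : 2 * θhat + 1 ≠ 0) :
    lam ^ 2 * θhat * (4 * θ * θhat + 4 * θ - θhat) / (8 * θ * (2 * θhat + 1) ^ 2) -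
      lam ^ 2 * θ * (4 * θ + 3) / (8 * (2 * θ + 1) ^ 2) =
    lam ^ 2 * -((θhat - θ) * (θhat - θ * (4 * θ + 3))) /
      (8 * θ * (2 * θhat + 1) ^ 2 * (2 * θ + 1) ^ 2) := by
  rw [div_sub_div _ _ (by positivity) (by positivity), div_eq_div_iff (by positivity)
    (by positivity)]
  ring

theorem stmt_7 (θ θhat lam : ℝ) (hθ : 0 < θ) (hlam : lam ≠ 0) :
    lam ^ 2 * θhat * (4 * θ * θhat + 4 * θ - θhat) / (8 * θ * (2 * θhat + 1) ^ 2) >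
      lam ^ 2 * θ * (4 * θ + 3) / (8 * (2 * θ + 1) ^ 2) ↔
    θ < θhat ∧ θhat < θ * (4 * θ + 3) := by
  by_cases hθhat : 2 * θhat + 1 = 0
  · have hrhs : 0 < lam ^ 2 * θ * (4 * θ + 3) / (8 * (2 * θ + 1) ^ 2) := by positivity
    simp only [hθhat, zero_pow two_ne_zero, mul_zero, div_zero, gt_iff_lt]
    exact iff_of_false hrhs.not_gt fun ⟨hlt, _⟩ ↦ by linarith
  · have hden : 0 < 8 * θ * (2 * θhat + 1) ^ 2 * (2 * θ + 1) ^ 2 := by positivity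
    have hroots : θ ≤ θ * (4 * θ + 3) := by nlinarith
    rw [gt_iff_lt, ← sub_pos, collusion_sub_monopoly lam hθ hθhat, div_pos_iff_of_pos_right hden,
      mul_pos_iff_of_pos_left (by positivity), neg_pos, sub_mul_sub_neg_iff θhat hroots]
end

section
/- For all θ₁, θ₂ > 0, the Cournot equilibrium effort λθ₁(θ₂+1)/((2θ₁+1)(2θ₂+1) - θ₁θ₂) of agent 1 is strictly less than the θ₁-monopoly effort λθ₁/(2θ₁+1), for any λ > 0. -/
theorem stmt_17 (θ₁ θ₂ lam : ℝ) (hθ₁ : 0 < θ₁) (hθ₂ : 0 < θ₂) (hlam : 0 < lam) :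
    lam * θ₁ * (θ₂ + 1) / ((2 * θ₁ + 1) * (2 * θ₂ + 1) - θ₁ * θ₂) <
    lam * θ₁ / (2 * θ₁ + 1) := by
  set D := (2 * θ₁ + 1) * (2 * θ₂ + 1) - θ₁ * θ₂
  have hgap : D - (θ₂ + 1) * (2 * θ₁ + 1) = θ₂ * (θ₁ + 1) := by ring
  have hD : (θ₂ + 1) * (2 * θ₁ + 1) < D := by
    have : 0 < θ₂ * (θ₁ + 1) := by positivity
    linarith
  rw [div_lt_div_iff₀ (lt_trans (by positivity) hD) (by positivity)]
  calc lam * θ₁ * (θ₂ + 1) * (2 * θ₁ + 1) = lam * θ₁ * ((θ₂ + 1) * (2 * θ₁ + 1)) := by ring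
    _ < lam * θ₁ * D := mul_lt_mul_of_pos_left hD (by positivity)
end

section
/- For θ > (1+√17)/8, two agents of identical type θ each exerting half the θ-monopoly effort λθ/(2(2θ+1)) obtain strictly greater utility λ²θ(4θ+3)/(8(2θ+1)²) than the Cournot equilibrium utility λ²θ(θ+1)²(2θ+1)/(2(3θ²+4θ+1)²), for any λ > 0. -/
/-!
After cancelling `(θ + 1)²` through `3θ² + 4θ + 1 = (3θ + 1)(θ + 1)` and the common factor
`λ²θ`, the claim becomes `4(2θ + 1)³ < (4θ + 3)(3θ + 1)²`. The difference of the two sides is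
`(θ + 1)(4θ² - θ - 1)`, and `(1 + √17)/8` is the positive root of `4θ² - θ - 1`.
-/

lemma cournot_utility_eq (θ lam : ℝ) (hθ : θ + 1 ≠ 0) :
    lam ^ 2 * θ * (θ + 1) ^ 2 * (2 * θ + 1) / (2 * (3 * θ ^ 2 + 4 * θ + 1) ^ 2) =
      lam ^ 2 * θ * (2 * θ + 1) / (2 * (3 * θ + 1) ^ 2) := by
  rw [show 3 * θ ^ 2 + 4 * θ + 1 = (3 * θ + 1) * (θ + 1) by ring, mul_pow,
    ← mul_assoc, mul_right_comm (lam ^ 2 * θ)]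
  exact mul_div_mul_right _ _ (pow_ne_zero 2 hθ)

lemma quadratic_pos_of_gt_root {θ : ℝ} (hθ : (1 + Real.sqrt 17) / 8 < θ) :
    0 < 4 * θ ^ 2 - θ - 1 := by
  have hsqrt : Real.sqrt 17 ^ 2 = 17 := Real.sq_sqrt (by norm_num)
  have hroot : Real.sqrt 17 < 8 * θ - 1 := by linarith
  nlinarith [Real.sqrt_nonneg 17]

lemma cube_lt_of_quadratic_pos {θ : ℝ} (hθ : 0 < θ + 1) (hq : 0 < 4 * θ ^ 2 - θ - 1) :
    4 * (2 * θ + 1) ^ 3 < (4 * θ + 3) * (3 * θ + 1) ^ 2 := by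
  have hdiff : (4 * θ + 3) * (3 * θ + 1) ^ 2 - 4 * (2 * θ + 1) ^ 3 =
      (θ + 1) * (4 * θ ^ 2 - θ - 1) := by ring
  nlinarith [mul_pos hθ hq]

lemma cournot_ratio_lt_collusive_ratio {θ : ℝ} (hθ : (1 + Real.sqrt 17) / 8 < θ) :
    (2 * θ + 1) / (2 * (3 * θ + 1) ^ 2) < (4 * θ + 3) / (8 * (2 * θ + 1) ^ 2) := by
  have hθpos : 0 < θ := lt_of_le_of_lt (by positivity) hθ
  rw [div_lt_div_iff₀ (by positivity) (by positivity)]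
  nlinarith [cube_lt_of_quadratic_pos (by linarith) (quadratic_pos_of_gt_root hθ)]

theorem stmt_19 (θ lam : ℝ) (hθ : θ > (1 + Real.sqrt 17) / 8) (hlam : 0 < lam) :
    lam ^ 2 * θ * (4 * θ + 3) / (8 * (2 * θ + 1) ^ 2) >
    lam ^ 2 * θ * (θ + 1) ^ 2 * (2 * θ + 1) / (2 * (3 * θ ^ 2 + 4 * θ + 1) ^ 2) := by
  have hθpos : 0 < θ := lt_of_le_of_lt (by positivity) hθ
  rw [cournot_utility_eq θ lam (by linarith), gt_iff_lt, mul_div_assoc, mul_div_assoc]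
  exact mul_lt_mul_of_pos_left (cournot_ratio_lt_collusive_ratio hθ) (by positivity)
end
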